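/- arXiv:1606.05719 — 2 statements merged into one kernel-verified Lean document; each statement's English description precedes it below -/
import Mathlib

section
/- For a general linear quantum system the subspaces R_cō := Im(C_G) ∩ Ker(O_G), R_co := Im(C_G) ∩ Im(O_Gᴴ), R_c̄ō := Ker(C_Gᴴ) ∩ Ker(O_G) and R_c̄o := Ker(C_Gᴴ) ∩ Im(O_Gᴴ) satisfy R_cō = J_n · R_c̄o, R_co = J_n · R_co, and R_c̄ō = J_n · R_c̄ō, where J_n · S denotes the image of the subspace S under the linear map x ↦ J_n x. -/
open Matrix

noncomputable section

/-- `J_k = [I 0; 0 -I]` acting on `ℂ^{2k} = ℂ^k ⊕ ℂ^k`. -/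
def Jmat (k : ℕ) : Matrix (Fin k ⊕ Fin k) (Fin k ⊕ Fin k) ℂ :=
  Matrix.fromBlocks 1 0 0 (-1)

/-- Entrywise complex conjugation of a matrix. -/
def mconj {α β : Type} (M : Matrix α β ℂ) : Matrix α β ℂ :=
  M.map (starRingEnd ℂ)

/-- The doubled-up matrix `Δ(U,V) = [U V; conj V  conj U]`. -/
def doubledUp {k r : ℕ} (U V : Matrix (Fin k) (Fin r) ℂ) :
    Matrix (Fin k ⊕ Fin k) (Fin r ⊕ Fin r) ℂ :=
  Matrix.fromBlocks U V (mconj V) (mconj U)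

/-- The ♭-adjoint `X♭ = J_r Xᴴ J_k` of `X ∈ ℂ^{2k×2r}`. -/
def flat {k r : ℕ} (X : Matrix (Fin k ⊕ Fin k) (Fin r ⊕ Fin r) ℂ) :
    Matrix (Fin r ⊕ Fin r) (Fin k ⊕ Fin k) ℂ :=
  Jmat r * Xᴴ * Jmat k

/-- Orthogonal complement of a subspace of `ℂ^ι` w.r.t. the standard Hermitian
inner product `⟪y, x⟫ = (star y) ⬝ᵥ x`. -/
def orthComp {ι : Type} [Fintype ι] (S : Submodule ℂ (ι → ℂ)) : Submodule ℂ (ι → ℂ) where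
  carrier := {x | ∀ y ∈ S, star y ⬝ᵥ x = 0}
  add_mem' := by
    intro a b ha hb y hy
    simp only [Set.mem_setOf_eq] at *
    rw [dotProduct_add, ha y hy, hb y hy, add_zero]
  zero_mem' := by
    intro y hy
    simp
  smul_mem' := by
    intro c x hx y hy
    simp only [Set.mem_setOf_eq] at *
    rw [dotProduct_smul, hx y hy, smul_zero]

/-- The controllable subspace `Im(C_G) = ∑_{k<2n} Im(𝒜ᵏℬ)`. -/
def ctrbSub (n m : ℕ) (𝒜 : Matrix (Fin n ⊕ Fin n) (Fin n ⊕ Fin n) ℂ)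
    (ℬ : Matrix (Fin n ⊕ Fin n) (Fin m ⊕ Fin m) ℂ) : Submodule ℂ (Fin n ⊕ Fin n → ℂ) :=
  ⨆ k ∈ Finset.range (2 * n), LinearMap.range ((𝒜 ^ k * ℬ).mulVecLin)

/-- The unobservable subspace `Ker(O_G) = ⋂_{k<2n} Ker(𝒞𝒜ᵏ)`. -/
def unobsSub (n m : ℕ) (𝒜 : Matrix (Fin n ⊕ Fin n) (Fin n ⊕ Fin n) ℂ)
    (𝒞 : Matrix (Fin m ⊕ Fin m) (Fin n ⊕ Fin n) ℂ) : Submodule ℂ (Fin n ⊕ Fin n → ℂ) :=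
  ⨅ k ∈ Finset.range (2 * n), LinearMap.ker ((𝒞 * 𝒜 ^ k).mulVecLin)


/-! The system matrices satisfy `𝒜♭ = -𝒜 - 𝒞♭𝒞`, and `(𝒜ᵏℬ)ᴴ J_n = -J_m 𝒞 (𝒜♭)ᵏ`. Since `𝒜♭`
differs from `-𝒜` only by the output feedback term `-𝒞♭𝒞`, which does not change the unobservable
subspace, `Ker(O_G) = J_n Ker(C_Gᴴ)`. The unitary involution `J_n` commutes with orthogonal
complements, so also `J_n Ker(O_G) = Ker(C_Gᴴ)`, `J_n Im(O_Gᴴ) = Im(C_G)` and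
`J_n Im(C_G) = Im(O_Gᴴ)`, and the three relations follow by intersecting. -/

theorem star_mulVec_dotProduct {R ι κ : Type*} [CommSemiring R] [StarRing R] [Fintype ι]
    [Fintype κ] (M : Matrix ι κ R) (u : κ → R) (x : ι → R) :
    star (M *ᵥ u) ⬝ᵥ x = star u ⬝ᵥ (Mᴴ *ᵥ x) := by
  rw [star_mulVec, ← dotProduct_mulVec]

section OrthComp

variable {ι κ : Type} [Fintype ι] [Fintype κ]

@[simp]
theorem mem_orthComp {S : Submodule ℂ (ι → ℂ)} {x : ι → ℂ} :
    x ∈ orthComp S ↔ ∀ y ∈ S, star y ⬝ᵥ x = 0 :=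
  Iff.rfl

theorem orthComp_iSup {α : Sort*} (S : α → Submodule ℂ (ι → ℂ)) :
    orthComp (⨆ i, S i) = ⨅ i, orthComp (S i) := by
  ext x
  simp only [mem_orthComp, Submodule.mem_iInf]
  refine ⟨fun hx i y hy ↦ hx y (Submodule.mem_iSup_of_mem i hy), fun hx y hy ↦ ?_⟩
  refine Submodule.iSup_induction S (motive := fun y ↦ star y ⬝ᵥ x = 0) hy hx (by simp) ?_
  intro y z hy hz
  rw [star_add, add_dotProduct, hy, hz, add_zero]

open scoped ComplexOrder in
theorem orthComp_range_mulVecLin (M : Matrix ι κ ℂ) :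
    orthComp (LinearMap.range M.mulVecLin) = LinearMap.ker Mᴴ.mulVecLin := by
  ext x
  simp only [mem_orthComp, LinearMap.mem_range, LinearMap.mem_ker, mulVecLin_apply,
    forall_exists_index, forall_apply_eq_imp_iff, star_mulVec_dotProduct]
  exact ⟨fun h ↦ dotProduct_star_self_eq_zero.mp (h _), fun h u ↦ by rw [h, dotProduct_zero]⟩

theorem comap_ofLp_orthComp (S : Submodule ℂ (ι → ℂ)) :
    (orthComp S).comap (WithLp.linearEquiv 2 ℂ (ι → ℂ)).toLinearMap =
      (S.comap (WithLp.linearEquiv 2 ℂ (ι → ℂ)).toLinearMap :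
        Submodule ℂ (EuclideanSpace ℂ ι))ᗮ := by
  ext z
  rw [Submodule.mem_orthogonal, (WithLp.linearEquiv 2 ℂ (ι → ℂ)).symm.surjective.forall]
  simp [EuclideanSpace.inner_eq_star_dotProduct, dotProduct_comm]

theorem orthComp_orthComp (S : Submodule ℂ (ι → ℂ)) : orthComp (orthComp S) = S := by
  apply Submodule.comap_injective_of_surjective (WithLp.linearEquiv 2 ℂ (ι → ℂ)).surjective
  rw [comap_ofLp_orthComp, comap_ofLp_orthComp, Submodule.orthogonal_orthogonal]

variable [DecidableEq ι]

theorem map_mulVecLin_eq_comap_of_mem_unitary {U : Matrix ι ι ℂ}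
    (hU : U ∈ unitary (Matrix ι ι ℂ)) (S : Submodule ℂ (ι → ℂ)) :
    S.map U.mulVecLin = S.comap Uᴴ.mulVecLin := by
  rw [Unitary.mem_iff, ← star_eq_conjTranspose] at *
  refine le_antisymm ?_ fun x hx ↦ ⟨star U *ᵥ x, hx, ?_⟩
  · rintro _ ⟨y, hy, rfl⟩
    rwa [Submodule.mem_comap, mulVecLin_apply, mulVecLin_apply, mulVec_mulVec, hU.1, one_mulVec]
  · rw [mulVecLin_apply, mulVec_mulVec, hU.2, one_mulVec]

theorem orthComp_map_mulVecLin_of_mem_unitary {U : Matrix ι ι ℂ}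
    (hU : U ∈ unitary (Matrix ι ι ℂ)) (S : Submodule ℂ (ι → ℂ)) :
    orthComp (S.map U.mulVecLin) = (orthComp S).map U.mulVecLin := by
  ext x
  rw [map_mulVecLin_eq_comap_of_mem_unitary hU (orthComp S)]
  simp only [Submodule.mem_comap, mem_orthComp, Submodule.mem_map, mulVecLin_apply,
    forall_exists_index, and_imp, forall_apply_eq_imp_iff₂, star_mulVec_dotProduct]

end OrthComp

section Feedback

variable {R ι κ : Type*} [CommRing R] [Fintype ι]

theorem ker_mulVecLin_neg (M : Matrix κ ι R) :
    LinearMap.ker (-M).mulVecLin = LinearMap.ker M.mulVecLin := by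
  ext x
  simp

theorem ker_mulVecLin_mul_neg_pow [DecidableEq ι] (A : Matrix ι ι R) (C : Matrix κ ι R)
    (k : ℕ) :
    LinearMap.ker (C * (-A) ^ k).mulVecLin = LinearMap.ker (C * A ^ k).mulVecLin := by
  rcases neg_one_pow_eq_or (Matrix ι ι R) k with h | h <;> ext x <;> simp [neg_pow A, h]

variable [DecidableEq ι] [Fintype κ]

theorem add_mul_pow_mulVec_eq_pow_mulVec (A : Matrix ι ι R) (C : Matrix κ ι R)
    (L : Matrix ι κ R) {x : ι → R} {N : ℕ} (hx : ∀ k < N, C *ᵥ (A ^ k *ᵥ x) = 0) :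
    ∀ k ≤ N, (A + L * C) ^ k *ᵥ x = A ^ k *ᵥ x := by
  intro k hk
  induction k with
  | zero => simp
  | succ k ih =>
    rw [pow_succ', pow_succ', ← mulVec_mulVec, ← mulVec_mulVec, ih (by omega), add_mulVec,
      ← mulVec_mulVec, hx k (by omega), mulVec_zero, add_zero]

theorem iInf_ker_mul_pow_le_iInf_ker_mul_add_mul_pow (A : Matrix ι ι R) (C : Matrix κ ι R)
    (L : Matrix ι κ R) (N : ℕ) :
    ⨅ k ∈ Finset.range N, LinearMap.ker (C * A ^ k).mulVecLin ≤
      ⨅ k ∈ Finset.range N, LinearMap.ker (C * (A + L * C) ^ k).mulVecLin := by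
  intro x hx
  simp only [Submodule.mem_iInf, Finset.mem_range, LinearMap.mem_ker, mulVecLin_apply,
    ← mulVec_mulVec] at hx ⊢
  intro k hk
  rw [add_mul_pow_mulVec_eq_pow_mulVec A C L hx k hk.le]
  exact hx k hk

theorem iInf_ker_mul_add_mul_pow (A : Matrix ι ι R) (C : Matrix κ ι R) (L : Matrix ι κ R)
    (N : ℕ) :
    ⨅ k ∈ Finset.range N, LinearMap.ker (C * (A + L * C) ^ k).mulVecLin =
      ⨅ k ∈ Finset.range N, LinearMap.ker (C * A ^ k).mulVecLin := by
  refine le_antisymm ?_ (iInf_ker_mul_pow_le_iInf_ker_mul_add_mul_pow A C L N)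
  simpa using iInf_ker_mul_pow_le_iInf_ker_mul_add_mul_pow (A + L * C) C (-L) N

end Feedback

section Jmat

theorem Jmat_mul_Jmat (k : ℕ) : Jmat k * Jmat k = 1 := by
  simp [Jmat, fromBlocks_multiply, ← fromBlocks_one]

theorem Jmat_conjTranspose (k : ℕ) : (Jmat k)ᴴ = Jmat k := by
  simp [Jmat, fromBlocks_conjTranspose]

theorem Jmat_mem_unitary (k : ℕ) :
    Jmat k ∈ unitary (Matrix (Fin k ⊕ Fin k) (Fin k ⊕ Fin k) ℂ) := by
  rw [Unitary.mem_iff, star_eq_conjTranspose, Jmat_conjTranspose, and_self, Jmat_mul_Jmat]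

theorem map_Jmat_eq_comap {k : ℕ} (S : Submodule ℂ (Fin k ⊕ Fin k → ℂ)) :
    S.map (Jmat k).mulVecLin = S.comap (Jmat k).mulVecLin := by
  rw [map_mulVecLin_eq_comap_of_mem_unitary (Jmat_mem_unitary k), Jmat_conjTranspose]

theorem map_Jmat_map_Jmat {k : ℕ} (S : Submodule ℂ (Fin k ⊕ Fin k → ℂ)) :
    (S.map (Jmat k).mulVecLin).map (Jmat k).mulVecLin = S := by
  rw [← Submodule.map_comp, ← mulVecLin_mul, Jmat_mul_Jmat, mulVecLin_one, Submodule.map_id]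

theorem injective_mulVecLin_Jmat (k : ℕ) : Function.Injective (Jmat k).mulVecLin :=
  Function.LeftInverse.injective (g := (Jmat k).mulVecLin) fun x ↦ by
    rw [mulVecLin_apply, mulVecLin_apply, mulVec_mulVec, Jmat_mul_Jmat, one_mulVec]

theorem ker_mulVecLin_Jmat_mul {k : ℕ} {α : Type*} [Fintype α]
    (M : Matrix (Fin k ⊕ Fin k) α ℂ) :
    LinearMap.ker (Jmat k * M).mulVecLin = LinearMap.ker M.mulVecLin := by
  rw [mulVecLin_mul, LinearMap.ker_comp_of_ker_eq_bot _
    (LinearMap.ker_eq_bot.mpr (injective_mulVecLin_Jmat k))]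

theorem Jmat_mul_flat {k r : ℕ} (X : Matrix (Fin k ⊕ Fin k) (Fin r ⊕ Fin r) ℂ) :
    Jmat r * flat X = Xᴴ * Jmat k := by
  rw [flat, ← Matrix.mul_assoc, ← Matrix.mul_assoc, Jmat_mul_Jmat, Matrix.one_mul]

theorem flat_flat {k r : ℕ} (X : Matrix (Fin k ⊕ Fin k) (Fin r ⊕ Fin r) ℂ) :
    flat (flat X) = X := by
  simp only [flat, conjTranspose_mul, conjTranspose_conjTranspose, Jmat_conjTranspose,
    Matrix.mul_assoc, Jmat_mul_Jmat, Matrix.mul_one]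
  rw [← Matrix.mul_assoc, Jmat_mul_Jmat, Matrix.one_mul]

theorem conjTranspose_pow_mul_flat_mul_Jmat {n m : ℕ}
    (𝒜 : Matrix (Fin n ⊕ Fin n) (Fin n ⊕ Fin n) ℂ) (𝒞 : Matrix (Fin m ⊕ Fin m) (Fin n ⊕ Fin n) ℂ)
    (k : ℕ) : (𝒜 ^ k * flat 𝒞)ᴴ * Jmat n = Jmat m * 𝒞 * flat 𝒜 ^ k := by
  have hsemiconj : SemiconjBy (Jmat n) (flat 𝒜) 𝒜ᴴ := Jmat_mul_flat 𝒜
  calc (𝒜 ^ k * flat 𝒞)ᴴ * Jmat n = (flat 𝒞)ᴴ * (𝒜ᴴ ^ k * Jmat n) := by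
        rw [conjTranspose_mul, conjTranspose_pow, Matrix.mul_assoc]
    _ = (flat 𝒞)ᴴ * Jmat n * flat 𝒜 ^ k := by
        rw [← (hsemiconj.pow_right k).eq, Matrix.mul_assoc]
    _ = Jmat m * 𝒞 * flat 𝒜 ^ k := by
        rw [← Jmat_mul_flat, flat_flat]

end Jmat

section QuantumSystem

variable {n m : ℕ} {Ω 𝒜 : Matrix (Fin n ⊕ Fin n) (Fin n ⊕ Fin n) ℂ}
  {𝒞 : Matrix (Fin m ⊕ Fin m) (Fin n ⊕ Fin n) ℂ} {ℬ : Matrix (Fin n ⊕ Fin n) (Fin m ⊕ Fin m) ℂ}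

theorem flat_eq_neg_add_flat_mul (hΩ : Ω.IsHermitian)
    (h𝒜 : 𝒜 = (-Complex.I) • (Jmat n * Ω) - (1 / 2 : ℂ) • (flat 𝒞 * 𝒞)) :
    flat 𝒜 = -(𝒜 + flat 𝒞 * 𝒞) := by
  have hI : star (-Complex.I) = Complex.I := by simp
  have hhalf : star (1 / 2 : ℂ) = 1 / 2 := by simp
  subst h𝒜
  simp only [flat, conjTranspose_sub, conjTranspose_smul, conjTranspose_mul,
    conjTranspose_conjTranspose, Jmat_conjTranspose, hΩ.eq, hI, hhalf, Matrix.mul_sub,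
    Matrix.sub_mul, Matrix.mul_smul, Matrix.smul_mul, Matrix.mul_assoc, Jmat_mul_Jmat,
    Matrix.mul_one]
  module

theorem unobsSub_eq_map_Jmat_orthComp_ctrbSub (hΩ : Ω.IsHermitian)
    (h𝒜 : 𝒜 = (-Complex.I) • (Jmat n * Ω) - (1 / 2 : ℂ) • (flat 𝒞 * 𝒞)) (hℬ : ℬ = -flat 𝒞) :
    unobsSub n m 𝒜 𝒞 = (orthComp (ctrbSub n m 𝒜 ℬ)).map (Jmat n).mulVecLin := by
  have hker (k : ℕ) : LinearMap.ker ((𝒜 ^ k * ℬ)ᴴ * Jmat n).mulVecLin =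
      LinearMap.ker (𝒞 * (-𝒜 + -flat 𝒞 * 𝒞) ^ k).mulVecLin := by
    rw [hℬ, Matrix.mul_neg, conjTranspose_neg, Matrix.neg_mul, ker_mulVecLin_neg,
      conjTranspose_pow_mul_flat_mul_Jmat, Matrix.mul_assoc, ker_mulVecLin_Jmat_mul,
      flat_eq_neg_add_flat_mul hΩ h𝒜, neg_add, ← Matrix.neg_mul]
  calc unobsSub n m 𝒜 𝒞
      = ⨅ k ∈ Finset.range (2 * n), LinearMap.ker (𝒞 * (-𝒜) ^ k).mulVecLin := by
        simp only [unobsSub, ker_mulVecLin_mul_neg_pow]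
    _ = ⨅ k ∈ Finset.range (2 * n), LinearMap.ker (𝒞 * (-𝒜 + -flat 𝒞 * 𝒞) ^ k).mulVecLin :=
        (iInf_ker_mul_add_mul_pow _ _ _ _).symm
    _ = ⨅ k ∈ Finset.range (2 * n), LinearMap.ker ((𝒜 ^ k * ℬ)ᴴ * Jmat n).mulVecLin := by
        simp only [hker]
    _ = (orthComp (ctrbSub n m 𝒜 ℬ)).map (Jmat n).mulVecLin := by
        simp only [map_Jmat_eq_comap, ctrbSub, orthComp_iSup, orthComp_range_mulVecLin]
        simp only [Submodule.comap_iInf, mulVecLin_mul, LinearMap.ker_comp]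

end QuantumSystem

theorem kalman_subspaces_Jn_relations_general
    (n m : ℕ)
    (Ω : Matrix (Fin n ⊕ Fin n) (Fin n ⊕ Fin n) ℂ)
    (hΩH : Ω.IsHermitian)
    (𝒞 : Matrix (Fin m ⊕ Fin m) (Fin n ⊕ Fin n) ℂ)
    (𝒜 : Matrix (Fin n ⊕ Fin n) (Fin n ⊕ Fin n) ℂ)
    (h𝒜 : 𝒜 = (-Complex.I) • (Jmat n * Ω) - (1 / 2 : ℂ) • (flat 𝒞 * 𝒞))
    (ℬ : Matrix (Fin n ⊕ Fin n) (Fin m ⊕ Fin m) ℂ) (hℬ : ℬ = -flat 𝒞)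
    (Rcnoo : Submodule ℂ (Fin n ⊕ Fin n → ℂ))
    (hRcnoo : Rcnoo = ctrbSub n m 𝒜 ℬ ⊓ unobsSub n m 𝒜 𝒞)
    (Rco : Submodule ℂ (Fin n ⊕ Fin n → ℂ))
    (hRco : Rco = ctrbSub n m 𝒜 ℬ ⊓ orthComp (unobsSub n m 𝒜 𝒞))
    (Rncnoo : Submodule ℂ (Fin n ⊕ Fin n → ℂ))
    (hRncnoo : Rncnoo = orthComp (ctrbSub n m 𝒜 ℬ) ⊓ unobsSub n m 𝒜 𝒞)
    (Rnco : Submodule ℂ (Fin n ⊕ Fin n → ℂ))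
    (hRnco : Rnco = orthComp (ctrbSub n m 𝒜 ℬ) ⊓ orthComp (unobsSub n m 𝒜 𝒞)) :
    Rcnoo = Submodule.map (Jmat n).mulVecLin Rnco ∧
    Rco = Submodule.map (Jmat n).mulVecLin Rco ∧
    Rncnoo = Submodule.map (Jmat n).mulVecLin Rncnoo := by
  set C := ctrbSub n m 𝒜 ℬ
  set U := unobsSub n m 𝒜 𝒞
  have hCperp : (orthComp C).map (Jmat n).mulVecLin = U :=
    (unobsSub_eq_map_Jmat_orthComp_ctrbSub hΩH h𝒜 hℬ).symm
  have hU : U.map (Jmat n).mulVecLin = orthComp C := by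
    rw [← hCperp, map_Jmat_map_Jmat]
  have hUperp : (orthComp U).map (Jmat n).mulVecLin = C := by
    rw [← hCperp, orthComp_map_mulVecLin_of_mem_unitary (Jmat_mem_unitary n), map_Jmat_map_Jmat,
      orthComp_orthComp]
  have hC : C.map (Jmat n).mulVecLin = orthComp U := by
    rw [← hUperp, map_Jmat_map_Jmat]
  subst hRcnoo hRco hRncnoo hRnco
  simp only [Submodule.map_inf _ (injective_mulVecLin_Jmat n), hCperp, hU, hUperp, hC]
  exact ⟨inf_comm _ _, inf_comm _ _, inf_comm _ _⟩

/-- **Lemma 2, Eq. (17).** For a general linear quantum system, the four Kalman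
subspaces satisfy `R_cō = J_n·R_c̄o`, `R_co = J_n·R_co`, `R_c̄ō = J_n·R_c̄ō`. -/
theorem kalman_subspaces_Jn_relations
    (n m : ℕ) (hn : 0 < n) (hm : 0 < m)
    (Ωm Ωp : Matrix (Fin n) (Fin n) ℂ) (Cm Cp : Matrix (Fin m) (Fin n) ℂ)
    (Ω : Matrix (Fin n ⊕ Fin n) (Fin n ⊕ Fin n) ℂ) (hΩ : Ω = doubledUp Ωm Ωp)
    (hΩH : Ω.IsHermitian)
    (𝒞 : Matrix (Fin m ⊕ Fin m) (Fin n ⊕ Fin n) ℂ) (h𝒞 : 𝒞 = doubledUp Cm Cp)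
    (𝒜 : Matrix (Fin n ⊕ Fin n) (Fin n ⊕ Fin n) ℂ)
    (h𝒜 : 𝒜 = (-Complex.I) • (Jmat n * Ω) - (1 / 2 : ℂ) • (flat 𝒞 * 𝒞))
    (ℬ : Matrix (Fin n ⊕ Fin n) (Fin m ⊕ Fin m) ℂ) (hℬ : ℬ = -flat 𝒞)
    (Rcnoo : Submodule ℂ (Fin n ⊕ Fin n → ℂ))
    (hRcnoo : Rcnoo = ctrbSub n m 𝒜 ℬ ⊓ unobsSub n m 𝒜 𝒞)
    (Rco : Submodule ℂ (Fin n ⊕ Fin n → ℂ))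
    (hRco : Rco = ctrbSub n m 𝒜 ℬ ⊓ orthComp (unobsSub n m 𝒜 𝒞))
    (Rncnoo : Submodule ℂ (Fin n ⊕ Fin n → ℂ))
    (hRncnoo : Rncnoo = orthComp (ctrbSub n m 𝒜 ℬ) ⊓ unobsSub n m 𝒜 𝒞)
    (Rnco : Submodule ℂ (Fin n ⊕ Fin n → ℂ))
    (hRnco : Rnco = orthComp (ctrbSub n m 𝒜 ℬ) ⊓ orthComp (unobsSub n m 𝒜 𝒞)) :
    Rcnoo = Submodule.map (Jmat n).mulVecLin Rnco ∧
    Rco = Submodule.map (Jmat n).mulVecLin Rco ∧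
    Rncnoo = Submodule.map (Jmat n).mulVecLin Rncnoo :=
  kalman_subspaces_Jn_relations_general n m Ω hΩH 𝒞 𝒜 h𝒜 ℬ hℬ Rcnoo hRcnoo Rco hRco Rncnoo hRncnoo
    Rnco hRnco

end
end

section
/- For a general linear quantum system, if the stacked vector [x₁; x₂] (with x₁, x₂ ∈ ℂ^n) belongs to R_cō := Im(C_G) ∩ Ker(O_G), then the vector [x₁ + conj(x₂); conj(x₁) + x₂] also belongs to R_cō. -/
open Matrix

noncomputable section

/-!
A matrix `M` is doubled-up exactly when `M S = S M̄` for the block swap `S = [0 I; I 0]`, i.e. when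
it commutes with the antilinear involution `x ↦ S x̄`. This commutation survives products, real
combinations and negation, holds for `𝒞♭` (again doubled-up) and for `-i J Ω`, so it holds for all
`𝒜ᵏℬ` and `𝒞𝒜ᵏ`. Hence `Im(C_G)` and `Ker(O_G)` are invariant under `x ↦ S x̄`, and the vector in
question is `x + S x̄` for `x = [x₁; x₂]`.
-/

def conjSwap (ι : Type*) : (ι ⊕ ι → ℂ) →ₗ⋆[ℂ] (ι ⊕ ι → ℂ) where
  toFun x i := star (x i.swap)
  map_add' x y := by ext i; simp
  map_smul' c x := by ext i; simp

@[simp]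
lemma conjSwap_apply {ι : Type*} (x : ι ⊕ ι → ℂ) (i : ι ⊕ ι) :
    conjSwap ι x i = star (x i.swap) :=
  rfl

lemma conjSwap_sumElim {ι : Type*} (a b : ι → ℂ) :
    conjSwap ι (Sum.elim a b) = Sum.elim (star b) (star a) := by
  ext (i | i) <;> rfl

def CommutesConjSwap {α β : Type*} [Fintype β] (M : Matrix (α ⊕ α) (β ⊕ β) ℂ) : Prop :=
  ∀ u, M *ᵥ conjSwap β u = conjSwap α (M *ᵥ u)

namespace CommutesConjSwap

variable {α β γ : Type*} [Fintype β] [Fintype γ]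

lemma mul {M : Matrix (α ⊕ α) (β ⊕ β) ℂ} {N : Matrix (β ⊕ β) (γ ⊕ γ) ℂ}
    (hM : CommutesConjSwap M) (hN : CommutesConjSwap N) : CommutesConjSwap (M * N) := by
  intro u
  rw [← mulVec_mulVec, hN, hM, mulVec_mulVec]

lemma sub {M N : Matrix (α ⊕ α) (β ⊕ β) ℂ} (hM : CommutesConjSwap M)
    (hN : CommutesConjSwap N) : CommutesConjSwap (M - N) := by
  intro u
  rw [sub_mulVec, sub_mulVec, hM, hN, map_sub]

lemma neg {M : Matrix (α ⊕ α) (β ⊕ β) ℂ} (hM : CommutesConjSwap M) :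
    CommutesConjSwap (-M) := by
  intro u
  rw [neg_mulVec, neg_mulVec, hM, map_neg]

lemma smul {M : Matrix (α ⊕ α) (β ⊕ β) ℂ} (hM : CommutesConjSwap M) {c : ℂ}
    (hc : star c = c) : CommutesConjSwap (c • M) := by
  intro u
  rw [smul_mulVec, smul_mulVec, hM, LinearMap.map_smulₛₗ, starRingEnd_apply, hc]

lemma pow [DecidableEq α] [Fintype α] {M : Matrix (α ⊕ α) (α ⊕ α) ℂ}
    (hM : CommutesConjSwap M) (k : ℕ) : CommutesConjSwap (M ^ k) := by
  induction k with
  | zero => intro u; simp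
  | succ k ih => rw [pow_succ]; exact ih.mul hM

end CommutesConjSwap

lemma commutesConjSwap_doubledUp {k r : ℕ} (U V : Matrix (Fin k) (Fin r) ℂ) :
    CommutesConjSwap (doubledUp U V) := by
  intro u
  ext (i | i) <;>
    simp [doubledUp, mconj, mulVec, dotProduct, Fintype.sum_sum_type, star_sum, add_comm]

lemma flat_doubledUp {k r : ℕ} (U V : Matrix (Fin k) (Fin r) ℂ) :
    flat (doubledUp U V) = doubledUp Uᴴ (-Vᵀ) := by
  simp only [flat, doubledUp, Jmat, mconj, fromBlocks_conjTranspose, fromBlocks_multiply]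
  congr 1 <;> ext <;> simp

lemma negI_smul_Jmat_mul_doubledUp {k r : ℕ} (U V : Matrix (Fin k) (Fin r) ℂ) :
    (-Complex.I) • (Jmat k * doubledUp U V)
      = doubledUp ((-Complex.I) • U) ((-Complex.I) • V) := by
  simp only [Jmat, doubledUp, mconj, fromBlocks_multiply, fromBlocks_smul]
  congr 1 <;> ext <;> simp

lemma conjSwap_mem_ctrbSub {n m : ℕ} {𝒜 : Matrix (Fin n ⊕ Fin n) (Fin n ⊕ Fin n) ℂ}
    {ℬ : Matrix (Fin n ⊕ Fin n) (Fin m ⊕ Fin m) ℂ} (hA : CommutesConjSwap 𝒜)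
    (hB : CommutesConjSwap ℬ) {x : Fin n ⊕ Fin n → ℂ} (hx : x ∈ ctrbSub n m 𝒜 ℬ) :
    conjSwap _ x ∈ ctrbSub n m 𝒜 ℬ := by
  have hle : ctrbSub n m 𝒜 ℬ ≤ (ctrbSub n m 𝒜 ℬ).comap (conjSwap _) := by
    refine iSup₂_le fun k hk => ?_
    rintro _ ⟨u, rfl⟩
    rw [Submodule.mem_comap, mulVecLin_apply, ← (hA.pow k).mul hB u]
    exact Submodule.mem_iSup_of_mem k (Submodule.mem_iSup_of_mem hk (LinearMap.mem_range_self _ _))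
  exact hle hx

lemma conjSwap_mem_unobsSub {n m : ℕ} {𝒜 : Matrix (Fin n ⊕ Fin n) (Fin n ⊕ Fin n) ℂ}
    {𝒞 : Matrix (Fin m ⊕ Fin m) (Fin n ⊕ Fin n) ℂ} (hA : CommutesConjSwap 𝒜)
    (hC : CommutesConjSwap 𝒞) {x : Fin n ⊕ Fin n → ℂ} (hx : x ∈ unobsSub n m 𝒜 𝒞) :
    conjSwap _ x ∈ unobsSub n m 𝒜 𝒞 := by
  simp only [unobsSub, Submodule.mem_iInf, LinearMap.mem_ker, mulVecLin_apply] at hx ⊢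
  intro k hk
  rw [hC.mul (hA.pow k), hx k hk, map_zero]

theorem Rcnoo_closed_under_conj_swap_general
    (n m : ℕ)
    (Ωm Ωp : Matrix (Fin n) (Fin n) ℂ) (Cm Cp : Matrix (Fin m) (Fin n) ℂ)
    (Ω : Matrix (Fin n ⊕ Fin n) (Fin n ⊕ Fin n) ℂ) (hΩ : Ω = doubledUp Ωm Ωp)
    (𝒞 : Matrix (Fin m ⊕ Fin m) (Fin n ⊕ Fin n) ℂ) (h𝒞 : 𝒞 = doubledUp Cm Cp)
    (𝒜 : Matrix (Fin n ⊕ Fin n) (Fin n ⊕ Fin n) ℂ)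
    (h𝒜 : 𝒜 = (-Complex.I) • (Jmat n * Ω) - (1 / 2 : ℂ) • (flat 𝒞 * 𝒞))
    (ℬ : Matrix (Fin n ⊕ Fin n) (Fin m ⊕ Fin m) ℂ) (hℬ : ℬ = -flat 𝒞)
    (x₁ x₂ : Fin n → ℂ)
    (hx : Sum.elim x₁ x₂ ∈ ctrbSub n m 𝒜 ℬ ⊓ unobsSub n m 𝒜 𝒞) :
    Sum.elim (x₁ + star x₂) (star x₁ + x₂) ∈ ctrbSub n m 𝒜 ℬ ⊓ unobsSub n m 𝒜 𝒞 := by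
  have hC : CommutesConjSwap 𝒞 := h𝒞 ▸ commutesConjSwap_doubledUp Cm Cp
  have hflatC : CommutesConjSwap (flat 𝒞) := by
    rw [h𝒞, flat_doubledUp]
    exact commutesConjSwap_doubledUp _ _
  have hB : CommutesConjSwap ℬ := hℬ ▸ hflatC.neg
  have hA : CommutesConjSwap 𝒜 := by
    rw [h𝒜, hΩ, negI_smul_Jmat_mul_doubledUp]
    exact (commutesConjSwap_doubledUp _ _).sub ((hflatC.mul hC).smul (by norm_num))
  have hsplit : Sum.elim (x₁ + star x₂) (star x₁ + x₂)
      = Sum.elim x₁ x₂ + conjSwap _ (Sum.elim x₁ x₂) := by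
    rw [conjSwap_sumElim]
    ext (i | i) <;> simp [add_comm]
  obtain ⟨hc, ho⟩ := hx
  rw [hsplit]
  exact ⟨add_mem hc (conjSwap_mem_ctrbSub hA hB hc), add_mem ho (conjSwap_mem_unobsSub hA hC ho)⟩

/-- **Lemma 5.** For a general linear quantum system, if `[x₁; x₂] ∈ R_cō = Im(C_G) ∩ Ker(O_G)`
then `[x₁ + conj x₂; conj x₁ + x₂] ∈ R_cō`. -/
theorem Rcnoo_closed_under_conj_swap
    (n m : ℕ) (hn : 0 < n) (hm : 0 < m)
    (Ωm Ωp : Matrix (Fin n) (Fin n) ℂ) (Cm Cp : Matrix (Fin m) (Fin n) ℂ)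
    (Ω : Matrix (Fin n ⊕ Fin n) (Fin n ⊕ Fin n) ℂ) (hΩ : Ω = doubledUp Ωm Ωp)
    (hΩH : Ω.IsHermitian)
    (𝒞 : Matrix (Fin m ⊕ Fin m) (Fin n ⊕ Fin n) ℂ) (h𝒞 : 𝒞 = doubledUp Cm Cp)
    (𝒜 : Matrix (Fin n ⊕ Fin n) (Fin n ⊕ Fin n) ℂ)
    (h𝒜 : 𝒜 = (-Complex.I) • (Jmat n * Ω) - (1 / 2 : ℂ) • (flat 𝒞 * 𝒞))
    (ℬ : Matrix (Fin n ⊕ Fin n) (Fin m ⊕ Fin m) ℂ) (hℬ : ℬ = -flat 𝒞)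
    (x₁ x₂ : Fin n → ℂ)
    (hx : Sum.elim x₁ x₂ ∈ ctrbSub n m 𝒜 ℬ ⊓ unobsSub n m 𝒜 𝒞) :
    Sum.elim (x₁ + star x₂) (star x₁ + x₂) ∈ ctrbSub n m 𝒜 ℬ ⊓ unobsSub n m 𝒜 𝒞 :=
  Rcnoo_closed_under_conj_swap_general n m Ωm Ωp Cm Cp Ω hΩ 𝒞 h𝒞 𝒜 h𝒜 ℬ hℬ x₁ x₂ hx

end
end
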